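/- arXiv:2301.01816 — 2 statements merged into one kernel-verified Lean document; each statement's English description precedes it below -/
import Mathlib

section
/- The map exp_α sending a linear functional ψ on the free (non-unital) tensor algebra T₀(V) to the functional exp_α(ψ)(x₁⋯xₙ) := Σ_{π ∈ P(n)} α_π · ψ^{⊗|π|}(x_π), where α is a monic family of weights on partitions, is a bijection on the dual space T₀(V)'. -/
/-!
Since `α` is monic, the trivial partition contributes exactly `ψ(x₁⋯xₙ)` to
`exp_α(ψ)(x₁⋯xₙ)`, while every other partition only involves `ψ` on strictly shorter words.
So `exp_α(ψ) = φ` is a triangular system, solved uniquely by recursion on the length `n`; the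
solution `log_α(φ)` is again multilinear because, for a partition `P`, the product over the
blocks `β ∈ P` of multilinear functionals of `x_β` is multilinear in `x`.
-/

/-- `P` is a set partition of the finite set `S`. -/
def IsPartitionOf {γ : Type} [DecidableEq γ] (S : Finset γ) (P : Finset (Finset γ)) : Prop :=
  (∀ b ∈ P, b.Nonempty ∧ b ⊆ S) ∧ ∀ i ∈ S, (P.filter (fun b => i ∈ b)).card = 1

instance {γ : Type} [DecidableEq γ] (S : Finset γ) : DecidablePred (IsPartitionOf S) := by
  intro P; unfold IsPartitionOf; infer_instance

/-- The finite set of all set partitions of `S ⊆ Fin n`. -/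
def partitionsOf {n : ℕ} (S : Finset (Fin n)) : Finset (Finset (Finset (Fin n))) :=
  Finset.univ.filter (IsPartitionOf S)

/-- A multi-faced partition: a length, a face word and a set partition (as a setoid). -/
structure MFP (F : Type) where
  n : ℕ
  face : Fin n → F
  rel : Setoid (Fin n)

/-- The multi-faced partition on `S` (with the induced order) with faces induced by the
face word `f` and blocks given by `P`. -/
def MFP.ofBlocks {F : Type} {n : ℕ} (f : Fin n → F) (S : Finset (Fin n))
    (P : Finset (Finset (Fin n))) : MFP F where
  n := S.card
  face := fun j => f (S.orderIsoOfFin rfl j).1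
  rel := Setoid.ker (fun j => P.filter (fun b => (S.orderIsoOfFin rfl j).1 ∈ b))

open Finset

lemma mem_partitionsOf {n : ℕ} {S : Finset (Fin n)} {P : Finset (Finset (Fin n))} :
    P ∈ partitionsOf S ↔ IsPartitionOf S P := by
  simp [partitionsOf]

namespace IsPartitionOf

variable {γ : Type} [DecidableEq γ] {S : Finset γ} {P : Finset (Finset γ)}

lemma exists_mem_block (hP : IsPartitionOf S P) {i : γ} (hi : i ∈ S) :
    ∃ β ∈ P, i ∈ β ∧ ∀ b ∈ P, i ∈ b → b = β := by
  obtain ⟨β, hβ⟩ := card_eq_one.1 (hP.2 i hi)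
  have hmem : ∀ b, b ∈ P ∧ i ∈ b ↔ b = β := fun b => by
    rw [← mem_singleton, ← hβ, mem_filter]
  exact ⟨β, ((hmem β).2 rfl).1, ((hmem β).2 rfl).2, fun b hb hib => (hmem b).1 ⟨hb, hib⟩⟩

lemma singleton (hS : S.Nonempty) : IsPartitionOf S {S} :=
  ⟨by simpa using hS, fun i hi => by rw [filter_singleton, if_pos hi, card_singleton]⟩

lemma card_lt (hP : IsPartitionOf S P) (hne : P ≠ {S}) {β : Finset γ} (hβ : β ∈ P) :
    β.card < S.card := by
  refine card_lt_card (Finset.ssubset_iff_subset_ne.2 ⟨(hP.1 β hβ).2, fun hβS => hne ?_⟩)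
  refine eq_singleton_iff_unique_mem.2 ⟨hβS ▸ hβ, fun b hb => ?_⟩
  obtain ⟨j, hj⟩ := (hP.1 b hb).1
  obtain ⟨β₀, -, -, huniq⟩ := hP.exists_mem_block ((hP.1 b hb).2 hj)
  rw [huniq b hb hj, ← huniq β hβ (hβS ▸ (hP.1 b hb).2 hj), hβS]

lemma exists_orderIsoOfFin_eq [LinearOrder γ] (hP : IsPartitionOf S P) {i : γ} (hi : i ∈ S) :
    ∃ β ∈ P, ∃ j : Fin β.card, (β.orderIsoOfFin rfl j).1 = i ∧ ∀ b ∈ P, i ∈ b → b = β := by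
  obtain ⟨β, hβ, hiβ, huniq⟩ := hP.exists_mem_block hi
  exact ⟨β, hβ, (β.orderIsoOfFin rfl).symm ⟨i, hiβ⟩, by simp, huniq⟩

end IsPartitionOf

section Functionals

variable {R : Type*} {F : Type} {V : F → Type*}

/-- A linear functional on `T₀(⊕_Q V^Q)`, given by its multilinear components `ψ n f` on the
words of faces `f`. -/
abbrev TensorDual (R : Type*) [CommSemiring R] (V : F → Type*) [∀ Q, AddCommMonoid (V Q)]
    [∀ Q, Module R (V Q)] : Type _ :=
  ∀ (n : ℕ) (f : Fin n → F), MultilinearMap R (fun i => V (f i)) R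

section CommSemiring

variable [CommSemiring R] [∀ Q, AddCommMonoid (V Q)] [∀ Q, Module R (V Q)]

lemma TensorDual.apply_restrict_univ (ψ : TensorDual R V) {n : ℕ} (f : Fin n → F)
    (x : ∀ i, V (f i)) :
    ψ (univ : Finset (Fin n)).card (fun j => f (univ.orderIsoOfFin rfl j).1)
      (fun j => x (univ.orderIsoOfFin rfl j).1) = ψ n f x := by
  suffices ∀ m (h : m = n) (e : Fin m → Fin n), (∀ j, e j = Fin.cast h j) →
      ψ m (fun j => f (e j)) (fun j => x (e j)) = ψ n f x from
    this _ (card_fin n) _ fun j => congr_fun (orderEmbOfFin_unique (s := univ) rfl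
      (f := Fin.cast (card_fin n)) (fun _ => mem_univ _) (Fin.cast_strictMono _)).symm j
  rintro m rfl e he
  obtain rfl : e = id := funext fun j => (he j).trans (Fin.cast_eq_self j)
  rfl

lemma prod_blocks_update (ψ : TensorDual R V) {n : ℕ} {f : Fin n → F}
    {P : Finset (Finset (Fin n))} {β₀ : Finset (Fin n)} (hβ₀ : β₀ ∈ P) (j₀ : Fin β₀.card)
    (huniq : ∀ b ∈ P, (β₀.orderIsoOfFin rfl j₀).1 ∈ b → b = β₀)
    (x : ∀ i, V (f i)) (v : V (f (β₀.orderIsoOfFin rfl j₀).1)) :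
    ∏ β ∈ P, ψ β.card (fun j => f (β.orderIsoOfFin rfl j).1)
        (fun j => Function.update x (β₀.orderIsoOfFin rfl j₀).1 v (β.orderIsoOfFin rfl j).1)
      = ψ β₀.card (fun j => f (β₀.orderIsoOfFin rfl j).1)
          (Function.update (fun j => x (β₀.orderIsoOfFin rfl j).1) j₀ v)
        * ∏ β ∈ P.erase β₀, ψ β.card (fun j => f (β.orderIsoOfFin rfl j).1)
            (fun j => x (β.orderIsoOfFin rfl j).1) := by
  have hinj : Function.Injective fun j => (β₀.orderIsoOfFin rfl j).1 :=
    Subtype.val_injective.comp (β₀.orderIsoOfFin rfl).injective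
  rw [← mul_prod_erase _ _ hβ₀, Function.update_comp_eq_of_injective' x hinj j₀ v]
  refine congrArg _ (prod_congr rfl fun β hβ => ?_)
  rw [Function.update_comp_eq_of_forall_ne' x v fun j hj =>
    ne_of_mem_erase hβ (huniq β (mem_of_mem_erase hβ) (hj ▸ (β.orderIsoOfFin rfl j).2))]

/-- `ψ^{⊗|P|}(x_P)` in the paper's notation. -/
def blockProd (ψ : TensorDual R V) {n : ℕ} {P : Finset (Finset (Fin n))}
    (hP : IsPartitionOf univ P) (f : Fin n → F) : MultilinearMap R (fun i => V (f i)) R :=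
  MultilinearMap.mk'
    (fun x => ∏ β ∈ P, ψ β.card (fun j => f (β.orderIsoOfFin rfl j).1)
      (fun j => x (β.orderIsoOfFin rfl j).1))
    (fun x i v w => by
      obtain ⟨β₀, hβ₀, j₀, rfl, huniq⟩ := hP.exists_orderIsoOfFin_eq (mem_univ i)
      simp only [prod_blocks_update ψ hβ₀ j₀ huniq, MultilinearMap.map_update_add, add_mul])
    (fun x i c v => by
      obtain ⟨β₀, hβ₀, j₀, rfl, huniq⟩ := hP.exists_orderIsoOfFin_eq (mem_univ i)
      simp only [prod_blocks_update ψ hβ₀ j₀ huniq, MultilinearMap.map_update_smul, smul_eq_mul,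
        mul_assoc])

end CommSemiring

section CommRing

variable [CommRing R] [∀ Q, AddCommMonoid (V Q)] [∀ Q, Module R (V Q)]

def IsMonic (α : MFP F → R) : Prop :=
  ∀ (n : ℕ) (f : Fin n → F) (S : Finset (Fin n)), S.Nonempty → α (MFP.ofBlocks f S {S}) = 1

/-- The summand of `exp_α(ψ)(x₁⋯xₙ)` indexed by the partition `P`. -/
def expTerm (α : MFP F → R) (ψ : TensorDual R V) {n : ℕ} (f : Fin n → F) (x : ∀ i, V (f i))
    (P : Finset (Finset (Fin n))) : R :=
  α (MFP.ofBlocks f univ P) *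
    ∏ β ∈ P, ψ β.card (fun j => f (β.orderIsoOfFin rfl j).1) (fun j => x (β.orderIsoOfFin rfl j).1)

lemma expTerm_congr (α : MFP F → R) {ψ ψ' : TensorDual R V} {n : ℕ} (f : Fin n → F)
    (x : ∀ i, V (f i)) {P : Finset (Finset (Fin n))} (h : ∀ β ∈ P, ψ β.card = ψ' β.card) :
    expTerm α ψ f x P = expTerm α ψ' f x P := by
  unfold expTerm
  rw [prod_congr rfl fun β hβ => by rw [h β hβ]]

lemma sum_expTerm_partitionsOf {α : MFP F → R} (hα : IsMonic α) (ψ : TensorDual R V) {n : ℕ}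
    (hn : 0 < n) (f : Fin n → F) (x : ∀ i, V (f i)) :
    ∑ P ∈ partitionsOf univ, expTerm α ψ f x P =
      ψ n f x + ∑ P ∈ (partitionsOf univ).erase {univ}, expTerm α ψ f x P := by
  have huniv : (univ : Finset (Fin n)).Nonempty := univ_nonempty_iff.2 (Fin.pos_iff_nonempty.1 hn)
  rw [← add_sum_erase _ _ (mem_partitionsOf.2 (IsPartitionOf.singleton huniv)), expTerm,
    hα n f univ huniv, one_mul, prod_singleton, ψ.apply_restrict_univ]

lemma isPartitionOf_of_mem_erase {n : ℕ} {P : Finset (Finset (Fin n))}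
    (hP : P ∈ (partitionsOf univ).erase {univ}) : IsPartitionOf univ P :=
  mem_partitionsOf.1 (mem_of_mem_erase hP)

lemma card_lt_of_mem_erase {n : ℕ} {P : Finset (Finset (Fin n))}
    (hP : P ∈ (partitionsOf univ).erase {univ}) {β : Finset (Fin n)} (hβ : β ∈ P) :
    β.card < n := by
  simpa using (isPartitionOf_of_mem_erase hP).card_lt (ne_of_mem_erase hP) hβ

/-- The truncation to `m < n` only makes the recursion well founded: by `card_lt_of_mem_erase`
no block of a non-trivial partition reaches it (`logα_apply`). -/
noncomputable def logα (α : MFP F → R) (φ : TensorDual R V) : TensorDual R V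
  | n, f => φ n f - ∑ P ∈ ((partitionsOf (univ : Finset (Fin n))).erase {univ}).attach,
      α (MFP.ofBlocks f univ P) •
        blockProd (fun m g => if _h : m < n then logα α φ m g else 0)
          (isPartitionOf_of_mem_erase P.2) f
  termination_by n => n

lemma logα_apply (α : MFP F → R) (φ : TensorDual R V) {n : ℕ} (f : Fin n → F)
    (x : ∀ i, V (f i)) :
    logα α φ n f x =
      φ n f x - ∑ P ∈ (partitionsOf univ).erase {univ}, expTerm α (logα α φ) f x P := by
  rw [logα, sub_apply, _root_.sum_apply, ← sum_attach _ (expTerm α (logα α φ) f x)]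
  refine congrArg _ (sum_congr rfl fun P _ => ?_)
  change expTerm α (fun m g => if _h : m < n then logα α φ m g else 0) f x P.1 = _
  refine expTerm_congr α f x fun β hβ => ?_
  funext g
  exact dif_pos (card_lt_of_mem_erase P.2 hβ)

lemma eq_sum_expTerm_logα {α : MFP F → R} (hα : IsMonic α) (φ : TensorDual R V) {n : ℕ} (hn : 0 < n)
    (f : Fin n → F) (x : ∀ i, V (f i)) :
    φ n f x = ∑ P ∈ partitionsOf univ, expTerm α (logα α φ) f x P := by
  rw [sum_expTerm_partitionsOf hα _ hn, logα_apply]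
  ring

lemma eq_logα_of_eq_sum_expTerm {α : MFP F → R} (hα : IsMonic α) {φ ψ : TensorDual R V}
    (hψ : ∀ n, 0 < n → ∀ (f : Fin n → F) (x : ∀ i, V (f i)),
      φ n f x = ∑ P ∈ partitionsOf univ, expTerm α ψ f x P)
    {n : ℕ} (hn : 0 < n) (f : Fin n → F) : ψ n f = logα α φ n f := by
  induction n using Nat.strong_induction_on with
  | _ n ih =>
  ext x
  have hterm : ∀ P ∈ (partitionsOf univ).erase {univ},
      expTerm α ψ f x P = expTerm α (logα α φ) f x P := fun P hP =>
    expTerm_congr α f x fun β hβ => funext (ih _ (card_lt_of_mem_erase hP hβ)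
      (card_pos.2 ((isPartitionOf_of_mem_erase hP).1 β hβ).1))
  have hφ := hψ n hn f x
  rw [sum_expTerm_partitionsOf hα _ hn, sum_congr rfl hterm] at hφ
  rw [logα_apply]
  linear_combination -hφ

end CommRing

end Functionals

/-- The map `exp_α` is a bijection on the dual of the non-unital tensor algebra
`T₀(V)` of the multi-faced vector space `V = ⊕_{Q ∈ F} V^Q`: linear functionals on
`T₀(V)` are identified with families `ψ = (ψ_{n,f})` of multilinear functionals
(indexed by lengths `n ≥ 1` and face words `f`), and for every `φ` there is exactly one
`ψ` with `exp_α(ψ) = φ`, i.e. with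
`φ(x₁⋯xₙ) = ∑_{π ∈ P(f)} α_π ψ^{⊗|π|}(x_π)` for all `n ≥ 1`. -/
theorem stmt_3 {F : Type} (V : F → Type) [∀ Q, AddCommGroup (V Q)] [∀ Q, Module ℂ (V Q)]
    (α : MFP F → ℂ)
    (hmonic : ∀ (n : ℕ) (f : Fin n → F) (S : Finset (Fin n)), S.Nonempty →
      α (MFP.ofBlocks f S {S}) = 1)
    (φ : ∀ (n : ℕ) (f : Fin n → F), MultilinearMap ℂ (fun i => V (f i)) ℂ) :
    ∃ ψ : ∀ (n : ℕ) (f : Fin n → F), MultilinearMap ℂ (fun i => V (f i)) ℂ,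
      (∀ (n : ℕ), 0 < n → ∀ (f : Fin n → F) (x : ∀ i, V (f i)),
        φ n f x = ∑ P ∈ partitionsOf (Finset.univ : Finset (Fin n)),
          α (MFP.ofBlocks f Finset.univ P) *
            ∏ β ∈ P, ψ β.card (fun j => f (β.orderIsoOfFin rfl j).1)
              (fun j => x (β.orderIsoOfFin rfl j).1)) ∧
      ∀ ψ' : ∀ (n : ℕ) (f : Fin n → F), MultilinearMap ℂ (fun i => V (f i)) ℂ,
        (∀ (n : ℕ), 0 < n → ∀ (f : Fin n → F) (x : ∀ i, V (f i)),
          φ n f x = ∑ P ∈ partitionsOf (Finset.univ : Finset (Fin n)),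
            α (MFP.ofBlocks f Finset.univ P) *
              ∏ β ∈ P, ψ' β.card (fun j => f (β.orderIsoOfFin rfl j).1)
                (fun j => x (β.orderIsoOfFin rfl j).1)) →
        ∀ (n : ℕ), 0 < n → ∀ f : Fin n → F, ψ' n f = ψ n f := by
  refine ⟨logα (V := V) α φ, fun n hn f x => ?_, fun ψ' hψ' n hn f => ?_⟩
  · exact eq_sum_expTerm_logα hmonic φ hn f x
  · exact eq_logα_of_eq_sum_expTerm (V := V) hmonic hψ' hn f
end

section
/- If a family of admissible weights (α_π) satisfies the splitting rule, the reduction rule and the color-change rule, then α_π = 1 for every interval partition π. -/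
namespace MFP

variable {F : Type}

/-- Doubling the leg `i` (equivalently, `π` is the reduction of `π.double i` obtained by
merging the two neighboring same-face legs `i`, `i+1`, which lie in the same block). -/
def double (π : MFP F) (i : Fin π.n) : MFP F where
  n := π.n + 1
  face := fun j => π.face (i.predAbove j)
  rel := π.rel.comap (Fin.predAbove i)

/-- Uniting the blocks of the legs `i` and `j` into one block. -/
def unite (π : MFP F) (i j : Fin π.n) : MFP F where
  n := π.n
  face := π.face
  rel :=
    { r := fun a b => π.rel.r a b ∨ ((π.rel.r a i ∨ π.rel.r a j) ∧ (π.rel.r b i ∨ π.rel.r b j))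
      iseqv := by
        refine ⟨fun a => Or.inl (π.rel.iseqv.refl a), ?_, ?_⟩
        · rintro a b (h | ⟨ha, hb⟩)
          · exact Or.inl (π.rel.iseqv.symm h)
          · exact Or.inr ⟨hb, ha⟩
        · rintro a b c (hab | ⟨ha, hb⟩) (hbc | ⟨hb', hc⟩)
          · exact Or.inl (π.rel.iseqv.trans hab hbc)
          · exact Or.inr ⟨hb'.imp (fun h => π.rel.iseqv.trans hab h)
              (fun h => π.rel.iseqv.trans hab h), hc⟩
          · exact Or.inr ⟨ha, hb.imp (fun h => π.rel.iseqv.trans (π.rel.iseqv.symm hbc) h)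
              (fun h => π.rel.iseqv.trans (π.rel.iseqv.symm hbc) h)⟩
          · exact Or.inr ⟨ha, hc⟩ }

/-- The block of the leg `i`, as a finite set of legs. -/
noncomputable def block (π : MFP F) (i : Fin π.n) : Finset (Fin π.n) :=
  @Finset.filter _ (fun j => π.rel.r i j) (fun _ => Classical.propDecidable _) Finset.univ

/-- The restriction of a multi-faced partition to a subset of the legs,
with the induced total order and faces. -/
def restrict (π : MFP F) (S : Finset (Fin π.n)) : MFP F where
  n := S.card
  face := fun j => π.face (S.orderIsoOfFin rfl j).1
  rel := π.rel.comap (fun j => (S.orderIsoOfFin rfl j).1)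

/-- The two-block partition formed by the blocks of the legs `i` and `j`,
on their union with the induced order. -/
noncomputable def pair (π : MFP F) (i j : Fin π.n) : MFP F :=
  π.restrict (π.block i ∪ π.block j)

/-- The mirror image of a multi-faced partition. -/
def mirror (π : MFP F) : MFP F where
  n := π.n
  face := fun j => π.face j.rev
  rel := π.rel.comap Fin.rev

/-- Changing the face of the leg `i` to `c`. -/
def updateFace (π : MFP F) (i : Fin π.n) (c : F) : MFP F where
  n := π.n
  face := Function.update π.face i c
  rel := π.rel

end MFP

/-- Admissible weights on multi-faced partitions (the symmetric case; block-permutation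
invariance is built into the encoding of partitions as setoids):
monic on one-block partitions, equal to `1` on two-point two-block partitions,
invariant under reduction (equivalently, doubling of legs), satisfying the splitting rule
for blocks with neighboring legs of the same face, invariant under changing the face of
an extremal leg, and conjugated under mirror symmetry. -/
structure Admissible {F : Type} (α : MFP F → ℂ) : Prop where
  monic : ∀ (n : ℕ), 0 < n → ∀ f : Fin n → F, α ⟨n, f, ⊤⟩ = 1
  twoPoint : ∀ (f : Fin 2 → F) (r : Setoid (Fin 2)), ¬ r.r 0 1 → α ⟨2, f, r⟩ = 1
  reduction : ∀ (π : MFP F) (i : Fin π.n), α (π.double i) = α π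
  splitRule : ∀ (π : MFP F) (i j : Fin π.n), (j : ℕ) = (i : ℕ) + 1 → π.face i = π.face j →
    ¬ π.rel.r i j → α π = α (π.unite i j) * α (π.pair i j)
  changeFirst : ∀ (π : MFP F) (h : 0 < π.n) (c : F), α (π.updateFace ⟨0, h⟩ c) = α π
  changeLast : ∀ (π : MFP F) (h : 0 < π.n) (c : F),
    α (π.updateFace ⟨π.n - 1, Nat.sub_lt h Nat.one_pos⟩ c) = α π
  mirrorConj : ∀ π : MFP F, α π.mirror = (starRingEnd ℂ) (α π)

/-- `π` is an interval partition: every block is an interval (convex set) of legs. -/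
def IsIntervalPartition {F : Type} (π : MFP F) : Prop :=
  ∀ i j k : Fin π.n, i ≤ j → j ≤ k → π.rel.r i k → π.rel.r i j

/-! Induction on the number of legs. If the last two legs lie in one block, changing the face
of the last leg to that of its neighbour turns the partition into a doubling, so the reduction
rule deletes the last leg; the same works at the front. Otherwise the first and the last leg are
singleton blocks. After recolouring the last leg, the splitting rule at the last two legs factors
`α π` into the weight of the partition with those two blocks united, whose last leg can now be
deleted, and the weight of the two-block restriction, which misses the first leg. Both factors
are weights of smaller interval partitions. -/

theorem Setoid.comap_eq_of_forall_rel {α : Type*} (r : Setoid α) {φ : α → α}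
    (h : ∀ a, r (φ a) a) : r.comap φ = r :=
  Setoid.ext fun a b =>
    ⟨fun hab => r.trans (r.symm (h a)) (r.trans hab (h b)),
      fun hab => r.trans (h a) (r.trans hab (r.symm (h b)))⟩

namespace MFP

variable {F : Type}

theorem double_mk_comap {m : ℕ} (f : Fin (m + 2) → F) (r : Setoid (Fin (m + 2)))
    (e : Fin (m + 1) → Fin (m + 2)) (p : Fin (m + 1)) (he : ∀ j, r (e (p.predAbove j)) j) :
    (⟨m + 1, f ∘ e, r.comap e⟩ : MFP F).double p = ⟨m + 2, f ∘ e ∘ p.predAbove, r⟩ := by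
  simp only [double, MFP.mk.injEq, heq_eq_eq, true_and]
  exact ⟨rfl, Setoid.comap_eq_of_forall_rel r he⟩

theorem updateFace_last_eq_double {m : ℕ} (f : Fin (m + 2) → F) (r : Setoid (Fin (m + 2)))
    (h : r (Fin.last m).castSucc (Fin.last (m + 1))) :
    (⟨m + 2, f, r⟩ : MFP F).updateFace (Fin.last (m + 1)) (f (Fin.last m).castSucc) =
      (⟨m + 1, f ∘ Fin.castSucc, r.comap Fin.castSucc⟩ : MFP F).double (Fin.last m) := by
  have hlast : ∀ j ≠ Fin.last (m + 1), ((Fin.last m).predAbove j).castSucc = j := by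
    intro j hj
    simp [Fin.predAbove_last_of_ne_last hj]
  rw [double_mk_comap]
  · simp only [updateFace, MFP.mk.injEq, heq_eq_eq, and_true, true_and]
    funext j
    by_cases hj : j = Fin.last (m + 1)
    · simp [hj]
    · simp [Function.update_of_ne hj, hlast j hj]
  · intro j
    by_cases hj : j = Fin.last (m + 1)
    · simpa [hj] using h
    · rw [hlast j hj]

theorem updateFace_zero_eq_double {m : ℕ} (f : Fin (m + 2) → F) (r : Setoid (Fin (m + 2)))
    (h : r 0 1) :
    (⟨m + 2, f, r⟩ : MFP F).updateFace 0 (f 1) =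
      (⟨m + 1, f ∘ Fin.succ, r.comap Fin.succ⟩ : MFP F).double 0 := by
  rw [double_mk_comap]
  · simp only [updateFace, MFP.mk.injEq, heq_eq_eq, and_true, true_and]
    funext j
    by_cases hj : j = 0
    · simp [hj]
    · simp [Function.update_of_ne hj, Fin.succ_predAbove_zero hj]
  · intro j
    by_cases hj : j = 0
    · simpa [hj] using r.symm h
    · rw [Fin.succ_predAbove_zero hj]

theorem mem_block {π : MFP F} {i k : Fin π.n} : k ∈ π.block i ↔ π.rel i k := by
  simp only [block, Finset.mem_filter, Finset.mem_univ, true_and]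

theorem pair_n_pos (π : MFP F) (i j : Fin π.n) : 0 < (π.pair i j).n :=
  show 0 < (π.block i ∪ π.block j).card from
    Finset.card_pos.2 ⟨i, Finset.mem_union_left _ (mem_block.2 (π.rel.refl i))⟩

theorem pair_n_lt (π : MFP F) {i j k : Fin π.n} (hi : ¬ π.rel i k) (hj : ¬ π.rel j k) :
    (π.pair i j).n < π.n := by
  have hk : k ∉ π.block i ∪ π.block j := by
    simp only [Finset.mem_union, mem_block]
    exact not_or.2 ⟨hi, hj⟩
  show (π.block i ∪ π.block j).card < π.n
  simpa using Finset.card_lt_univ_of_notMem hk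

end MFP

namespace IsIntervalPartition

variable {F : Type} {π : MFP F}

theorem comap (hπ : IsIntervalPartition π) {n : ℕ} (f : Fin n → F) {g : Fin n → Fin π.n}
    (hg : Monotone g) : IsIntervalPartition ⟨n, f, π.rel.comap g⟩ :=
  fun i j k hij hjk hik => hπ (g i) (g j) (g k) (hg hij) (hg hjk) hik

theorem restrict (hπ : IsIntervalPartition π) (S : Finset (Fin π.n)) :
    IsIntervalPartition (π.restrict S) :=
  hπ.comap _ fun _ _ h => (S.orderIsoOfFin rfl).monotone h

theorem rel_of_le_of_le (hπ : IsIntervalPartition π) {a b c : Fin π.n} (hab : a ≤ b)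
    (hbc : b ≤ c) (hac : π.rel a c) : π.rel b c :=
  π.rel.trans (π.rel.symm (hπ a b c hab hbc hac)) hac

theorem unite (hπ : IsIntervalPartition π) {i j : Fin π.n} (hij : (j : ℕ) = i + 1) :
    IsIntervalPartition (π.unite i j) := by
  intro a b c hab hbc hac
  rcases hac with hac | ⟨ha, hc⟩
  · exact Or.inl (hπ a b c hab hbc hac)
  refine Or.inr ⟨ha, ?_⟩
  rcases le_or_gt b i with hbi | hib
  · have hij' : i ≤ j := Fin.le_def.2 (by omega)
    rcases ha with ha | ha
    · exact Or.inl (hπ.rel_of_le_of_le hab hbi ha)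
    · exact Or.inr (hπ.rel_of_le_of_le hab (hbi.trans hij') ha)
  · have hjb : j ≤ b := Fin.le_def.2 (by have := Fin.lt_def.1 hib; omega)
    rcases hc with hc | hc
    · exact Or.inl (π.rel.symm (hπ i b c hib.le hbc (π.rel.symm hc)))
    · exact Or.inr (π.rel.symm (hπ j b c hjb hbc (π.rel.symm hc)))

end IsIntervalPartition

namespace Admissible

variable {F : Type} {α : MFP F → ℂ}

theorem apply_one_leg (hα : Admissible α) (f : Fin 1 → F) (r : Setoid (Fin 1)) :
    α ⟨1, f, r⟩ = 1 := by
  obtain rfl : r = ⊤ := Setoid.ext fun a b => by simp [Subsingleton.elim a b]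
  exact hα.monic 1 one_pos f

theorem apply_eq_comap_castSucc (hα : Admissible α) {m : ℕ} (f : Fin (m + 2) → F)
    (r : Setoid (Fin (m + 2))) (h : r (Fin.last m).castSucc (Fin.last (m + 1))) :
    α ⟨m + 2, f, r⟩ = α ⟨m + 1, f ∘ Fin.castSucc, r.comap Fin.castSucc⟩ := by
  rw [← hα.reduction ⟨m + 1, f ∘ Fin.castSucc, r.comap Fin.castSucc⟩ (Fin.last m),
    ← MFP.updateFace_last_eq_double f r h]
  exact (hα.changeLast ⟨m + 2, f, r⟩ (Nat.succ_pos _) _).symm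

theorem apply_eq_comap_succ (hα : Admissible α) {m : ℕ} (f : Fin (m + 2) → F)
    (r : Setoid (Fin (m + 2))) (h : r 0 1) :
    α ⟨m + 2, f, r⟩ = α ⟨m + 1, f ∘ Fin.succ, r.comap Fin.succ⟩ := by
  rw [← hα.reduction ⟨m + 1, f ∘ Fin.succ, r.comap Fin.succ⟩ 0,
    ← MFP.updateFace_zero_eq_double f r h]
  exact (hα.changeFirst ⟨m + 2, f, r⟩ (Nat.succ_pos _) _).symm

theorem apply_eq_one_of_ends_singleton (hα : Admissible α) {m : ℕ} {f : Fin (m + 3) → F}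
    {r : Setoid (Fin (m + 3))}
    (ih : ∀ ρ : MFP F, ρ.n < m + 3 → 0 < ρ.n → IsIntervalPartition ρ → α ρ = 1)
    (hπ : IsIntervalPartition ⟨m + 3, f, r⟩) (hfirst : ¬ r 0 1)
    (hlast : ¬ r (Fin.last (m + 1)).castSucc (Fin.last (m + 2))) :
    α ⟨m + 3, f, r⟩ = 1 := by
  set i : Fin (m + 3) := (Fin.last (m + 1)).castSucc
  set j : Fin (m + 3) := Fin.last (m + 2)
  set π₁ : MFP F := (⟨m + 3, f, r⟩ : MFP F).updateFace j (f i)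
  have hπ₁ : IsIntervalPartition π₁ := hπ
  have hface : π₁.face i = π₁.face j := by
    have hij : i ≠ j := (Fin.castSucc_lt_last _).ne
    simp [π₁, MFP.updateFace, Function.update_of_ne hij]
  have hunite : α (π₁.unite i j) = 1 := by
    refine (hα.apply_eq_comap_castSucc (m := m + 1) (π₁.unite i j).face (π₁.unite i j).rel
      (Or.inr ⟨Or.inl (r.refl i), Or.inr (r.refl j)⟩)).trans ?_
    exact ih _ (by simp) (Nat.succ_pos _)
      ((hπ₁.unite rfl).comap _ Fin.strictMono_castSucc.monotone)
  have hpair : α (π₁.pair i j) = 1 := by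
    have hzero : ∀ k, i ≤ k → ¬ r k 0 := fun k hik hk =>
      hfirst (hπ 0 1 k (Fin.zero_le _) (le_trans (Fin.le_def.2 (by simp [i])) hik) (r.symm hk))
    refine ih _ (π₁.pair_n_lt (k := (0 : Fin (m + 3))) (hzero i le_rfl) (hzero j (Fin.le_last i)))
      (π₁.pair_n_pos i j) (hπ₁.restrict _)
  calc α ⟨m + 3, f, r⟩ = α π₁ := (hα.changeLast _ (Nat.succ_pos _) _).symm
    _ = α (π₁.unite i j) * α (π₁.pair i j) := hα.splitRule π₁ i j rfl hface hlast
    _ = 1 := by rw [hunite, hpair, one_mul]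

theorem apply_eq_one_of_isIntervalPartition (hα : Admissible α) (π : MFP F) (hn : 0 < π.n)
    (hπ : IsIntervalPartition π) : α π = 1 := by
  induction hN : π.n using Nat.strong_induction_on generalizing π with
  | _ N ih =>
  obtain ⟨n, f, r⟩ := π
  obtain rfl : n = N := hN
  replace ih : ∀ ρ : MFP F, ρ.n < n → 0 < ρ.n → IsIntervalPartition ρ → α ρ = 1 :=
    fun ρ hρ h0 hI => ih _ hρ ρ h0 hI rfl
  match n with
  | 1 => exact hα.apply_one_leg f r
  | m + 2 =>
    by_cases hlast : r (Fin.last m).castSucc (Fin.last (m + 1))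
    · rw [hα.apply_eq_comap_castSucc f r hlast]
      exact ih _ (by simp) (Nat.succ_pos m) (hπ.comap _ Fin.strictMono_castSucc.monotone)
    cases m with
    | zero => exact hα.twoPoint f r hlast
    | succ m =>
      by_cases hfirst : r 0 1
      · rw [hα.apply_eq_comap_succ f r hfirst]
        exact ih _ (by simp) (Nat.succ_pos _) (hπ.comap _ Fin.strictMono_succ.monotone)
      · exact hα.apply_eq_one_of_ends_singleton ih hπ hfirst hlast

end Admissible

/-- Admissible weights (satisfying, in particular, the splitting rule, the reduction rule
and the face-change rule) take the value `1` on every interval partition. -/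
theorem stmt_4 {F : Type} (α : MFP F → ℂ) (hα : Admissible α) (π : MFP F)
    (hn : 0 < π.n) (hπ : IsIntervalPartition π) : α π = 1 :=
  hα.apply_eq_one_of_isIntervalPartition π hn hπ
end
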